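/- arXiv:2403.16260 — 2 statements merged into one kernel-verified Lean document; each statement's English description precedes it below -/
import Mathlib

section
/- Let μ > 0, a ∈ (0,1), b > 0, c > 1, and define T(x, a) = a·Φ(x/a) − Φ(x) where Φ is the standard normal CDF. Then μ·[T(bc, a) − T(b, a)] < 0. -/
/-!
For `0 < a < 1`, `T(·, a)` is strictly decreasing on `[0, ∞)`: the difference `T(x, a) - T(y, a)`
is the integral over `[x, y]` of `φ(s) - φ(s / a)`, which is positive because `s < s / a` and the
normal density `φ` decreases in `|s|`.
-/

open Real MeasureTheory

noncomputable def stdPdf (t : ℝ) : ℝ := Real.exp (-t^2/2) / Real.sqrt (2*Real.pi)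

noncomputable def stdCdf (x : ℝ) : ℝ := ∫ t in Set.Iic x, stdPdf t

/-- The function `T(x, a) = a Φ(x / a) - Φ(x)`, with the arguments in the order `a x`. -/
noncomputable def scaledCdfDiff (a x : ℝ) : ℝ := a * stdCdf (x / a) - stdCdf x

@[fun_prop]
lemma continuous_stdPdf : Continuous stdPdf := by
  unfold stdPdf
  fun_prop

lemma integrable_stdPdf : Integrable stdPdf := by
  convert (integrable_exp_neg_mul_sq (by norm_num : (0:ℝ) < 1 / 2)).div_const
    (Real.sqrt (2 * π)) using 2 with t
  simp only [stdPdf]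
  ring_nf

lemma stdPdf_lt_stdPdf_of_abs_lt {s t : ℝ} (h : |s| < |t|) : stdPdf t < stdPdf s := by
  have hsq : s ^ 2 < t ^ 2 := sq_lt_sq.2 h
  unfold stdPdf
  gcongr

lemma stdCdf_sub_stdCdf (x y : ℝ) : stdCdf y - stdCdf x = ∫ t in x..y, stdPdf t :=
  intervalIntegral.integral_Iic_sub_Iic integrable_stdPdf.integrableOn
    integrable_stdPdf.integrableOn

lemma scaledCdfDiff_sub_scaledCdfDiff {a : ℝ} (ha : a ≠ 0) (x y : ℝ) :
    scaledCdfDiff a x - scaledCdfDiff a y = ∫ s in x..y, (stdPdf s - stdPdf (s / a)) := by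
  have hscaled : a * (stdCdf (y / a) - stdCdf (x / a)) = ∫ s in x..y, stdPdf (s / a) := by
    rw [stdCdf_sub_stdCdf, intervalIntegral.integral_comp_div _ ha, smul_eq_mul]
  rw [intervalIntegral.integral_sub
    (continuous_stdPdf.intervalIntegrable _ _)
    (Continuous.intervalIntegrable (by fun_prop) _ _), ← hscaled,
    ← stdCdf_sub_stdCdf]
  unfold scaledCdfDiff
  ring

lemma scaledCdfDiff_strictAntiOn {a : ℝ} (ha₀ : 0 < a) (ha₁ : a < 1) :
    StrictAntiOn (scaledCdfDiff a) (Set.Ici 0) := by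
  intro x hx y _ hxy
  rw [← sub_pos, scaledCdfDiff_sub_scaledCdfDiff ha₀.ne']
  refine intervalIntegral.intervalIntegral_pos_of_pos_on
    (Continuous.intervalIntegrable (by fun_prop) _ _) (fun s hs => ?_) hxy
  have hs₀ : 0 < s := (Set.mem_Ici.1 hx).trans_lt hs.1
  have hs_lt : s < s / a := by rwa [lt_div_iff₀ ha₀, mul_lt_iff_lt_one_right hs₀]
  rw [sub_pos]
  apply stdPdf_lt_stdPdf_of_abs_lt
  rwa [abs_of_pos hs₀, abs_of_pos (hs₀.trans hs_lt)]

theorem T_diff_neg (μ a b c : ℝ) (hμ : 0 < μ) (ha : a ∈ Set.Ioo (0:ℝ) 1)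
    (hb : 0 < b) (hc : 1 < c) :
    μ * ((a * stdCdf (b*c/a) - stdCdf (b*c)) - (a * stdCdf (b/a) - stdCdf b)) < 0 := by
  have hT : scaledCdfDiff a (b * c) < scaledCdfDiff a b :=
    scaledCdfDiff_strictAntiOn ha.1 ha.2 (Set.mem_Ici.2 hb.le)
      (Set.mem_Ici.2 (hb.le.trans (le_mul_of_one_le_right hb.le hc.le)))
      (lt_mul_of_one_lt_right hb hc)
  exact mul_neg_of_pos_of_neg hμ (sub_neg.2 hT)
end

section
/- Let U(x,a) = a²φ(x/a) − φ(x) and V(x, a, c) = σ·[(1/c)·U(xc, a) − U(x, a) + (4(a−1)/√(2π))·(1 − 1/c)] with σ > 0 and φ the standard normal PDF. Then for all x > 0, a ∈ (0,1), and c > 1, the partial derivative of V with respect to c is strictly negative. -/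
open Real MeasureTheory

noncomputable def U (x a : ℝ) : ℝ := a^2 * stdPdf (x/a) - stdPdf x

noncomputable def V (σ x a c : ℝ) : ℝ :=
  σ * ((1/c) * U (x*c) a - U x a + (4*(a-1)/Real.sqrt (2*Real.pi)) * (1 - 1/c))

/-!
With `y = (c x)² / 2`, `c² √(2π) ∂V/∂c / σ = ψ 1 - ψ a` for `ψ t = (t² + 2y) e^{-y/t²} - 4t`.
Writing `u = y / t²`, `ψ' t = 2t (1 + u + 2u²) e^{-u} - 4`, and the cubic Taylor bound
`1 + u + 2u² ≤ 2eᵘ` makes `ψ' < 0` on `(0, 1)`; so `ψ` is strictly decreasing and `ψ 1 < ψ a`.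
-/

lemma one_add_add_two_mul_sq_le_two_mul_exp {u : ℝ} (hu : 0 ≤ u) :
    1 + u + 2 * u ^ 2 ≤ 2 * exp u := by
  have h := sum_le_exp_of_nonneg hu 4
  norm_num [Finset.sum_range_succ, Nat.factorial] at h
  nlinarith [mul_nonneg hu (sq_nonneg (u - 1))]

lemma hasDerivAt_stdPdf (t : ℝ) : HasDerivAt stdPdf (-t * stdPdf t) t := by
  have h : HasDerivAt (fun s : ℝ => -s ^ 2 / 2) (-t) t :=
    ((hasDerivAt_pow 2 t).neg.div_const 2).congr_deriv (by ring)
  exact (h.exp.div_const (sqrt (2 * π))).congr_deriv (by unfold stdPdf; ring)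

lemma hasDerivAt_U_mul (x c : ℝ) {a : ℝ} (ha : a ≠ 0) :
    HasDerivAt (fun c' => U (x * c') a) (x ^ 2 * c * (stdPdf (x * c) - stdPdf (x * c / a))) c := by
  have hxc := (hasDerivAt_id' c).const_mul x
  have h := ((hasDerivAt_stdPdf (x * c / a)).comp c (hxc.div_const a)).const_mul (a ^ 2) |>.sub
    ((hasDerivAt_stdPdf (x * c)).comp c hxc)
  refine h.congr_deriv ?_
  field_simp; ring

lemma hasDerivAt_V (σ x : ℝ) {a c : ℝ} (ha : a ≠ 0) (hc : c ≠ 0) :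
    HasDerivAt (V σ x a)
      (σ / sqrt (2 * π) * (-(1 / c ^ 2) * (a ^ 2 * exp (-c ^ 2 * x ^ 2 / (2 * a ^ 2))
          - exp (-c ^ 2 * x ^ 2 / 2)) + x ^ 2 * (exp (-c ^ 2 * x ^ 2 / 2)
          - exp (-c ^ 2 * x ^ 2 / (2 * a ^ 2))) + 4 * (a - 1) / c ^ 2)) c := by
  have hinv : HasDerivAt (fun c' : ℝ => 1 / c') (-(1 / c ^ 2)) c := by
    simpa [one_div] using hasDerivAt_inv hc
  have h := (((hinv.mul (hasDerivAt_U_mul x c ha)).sub_const (U x a)).add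
    (((hasDerivAt_const c 1).sub hinv).const_mul (4 * (a - 1) / sqrt (2 * π)))).const_mul σ
  refine h.congr_deriv ?_
  simp only [U, stdPdf]
  field_simp
  ring_nf

noncomputable def psi (y t : ℝ) : ℝ := (t ^ 2 + 2 * y) * exp (-y / t ^ 2) - 4 * t

lemma hasDerivAt_psi (y : ℝ) {t : ℝ} (ht : t ≠ 0) :
    HasDerivAt (psi y) (2 * t * (1 + y / t ^ 2 + 2 * (y / t ^ 2) ^ 2) * exp (-y / t ^ 2) - 4) t := by
  have hsq : HasDerivAt (fun s : ℝ => s ^ 2) (2 * t) t := by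
    simpa using hasDerivAt_pow 2 t
  have hexp := ((hasDerivAt_const t (-y)).div hsq (pow_ne_zero 2 ht)).exp
  have h := ((hsq.add_const (2 * y)).mul hexp).sub ((hasDerivAt_id' t).const_mul 4)
  refine h.congr_deriv ?_
  simp only [Pi.div_apply]
  field_simp
  ring

lemma deriv_psi_neg {y t : ℝ} (hy : 0 ≤ y) (ht : t ∈ Set.Ioo 0 1) : deriv (psi y) t < 0 := by
  obtain ⟨ht0, ht1⟩ := ht
  set u := y / t ^ 2
  have hu : 0 ≤ u := by positivity
  rw [(hasDerivAt_psi y ht0.ne').deriv, neg_div, sub_neg]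
  have hbound : (1 + u + 2 * u ^ 2) * exp (-u) ≤ 2 := by
    calc (1 + u + 2 * u ^ 2) * exp (-u) ≤ 2 * exp u * exp (-u) := by
          gcongr; exact one_add_add_two_mul_sq_le_two_mul_exp hu
      _ = 2 := by rw [mul_assoc, ← exp_add, add_neg_cancel, exp_zero, mul_one]
  have hpos : 0 < (1 + u + 2 * u ^ 2) * exp (-u) := by positivity
  nlinarith

lemma strictAntiOn_psi {y : ℝ} (hy : 0 ≤ y) : StrictAntiOn (psi y) (Set.Ioc 0 1) := by
  refine strictAntiOn_of_deriv_neg (convex_Ioc 0 1) ?_ ?_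
  · exact fun t ht => (hasDerivAt_psi y ht.1.ne').continuousAt.continuousWithinAt
  · rw [interior_Ioc]
    exact fun t ht => deriv_psi_neg hy ht

lemma deriv_V_bracket_eq_psi_sub (x : ℝ) {a c : ℝ} (ha : a ≠ 0) (hc : c ≠ 0) :
    -(1 / c ^ 2) * (a ^ 2 * exp (-c ^ 2 * x ^ 2 / (2 * a ^ 2)) - exp (-c ^ 2 * x ^ 2 / 2))
        + x ^ 2 * (exp (-c ^ 2 * x ^ 2 / 2) - exp (-c ^ 2 * x ^ 2 / (2 * a ^ 2)))
        + 4 * (a - 1) / c ^ 2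
      = (psi (c ^ 2 * x ^ 2 / 2) 1 - psi (c ^ 2 * x ^ 2 / 2) a) / c ^ 2 := by
  have hexp : -(c ^ 2 * x ^ 2 / 2) / a ^ 2 = -c ^ 2 * x ^ 2 / (2 * a ^ 2) := by
    field_simp
  simp only [psi, one_pow, div_one, hexp]
  field_simp
  ring

theorem deriv_V_c_neg_general (σ x a c : ℝ) (hσ : 0 < σ)
    (ha : a ∈ Set.Ioo (0:ℝ) 1) (hc : 1 < c) :
    deriv (fun c' => V σ x a c') c < 0 := by
  obtain ⟨ha0, ha1⟩ := ha
  have hc0 : 0 < c := one_pos.trans hc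
  rw [(hasDerivAt_V σ x ha0.ne' hc0.ne').deriv, deriv_V_bracket_eq_psi_sub x ha0.ne' hc0.ne']
  have hpsi : psi (c ^ 2 * x ^ 2 / 2) 1 < psi (c ^ 2 * x ^ 2 / 2) a :=
    strictAntiOn_psi (by positivity) ⟨ha0, ha1.le⟩ ⟨one_pos, le_rfl⟩ ha1
  exact mul_neg_of_pos_of_neg (by positivity) (div_neg_of_neg_of_pos (sub_neg.2 hpsi) (by positivity))

theorem deriv_V_c_neg (σ x a c : ℝ) (hσ : 0 < σ) (hx : 0 < x)
    (ha : a ∈ Set.Ioo (0:ℝ) 1) (hc : 1 < c) :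
    deriv (fun c' => V σ x a c') c < 0 :=
  deriv_V_c_neg_general σ x a c hσ ha hc
end
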